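/- arXiv:2407.13636 — 9 statements merged into one kernel-verified Lean document; each statement's English description precedes it below -/
import Mathlib

section
/- Let M ⊆ G with |M| = p^s and let U = Stab(M) be its stabilizer under the left-multiplication action of G on subsets. Then: (1) |[M]| · |U| = p^t·n; (2) there is a unique l ∈ [0, s] with |U| = p^{s−l}, M is a disjoint union of p^l right cosets U·m_1, …, U·m_{p^l} of U with m_i ∈ M, and the orbit of M has length |[M]| = p^{t−s+l}·n. -/
open Pointwise

/-! The stabilizer `U` of `M` satisfies `U * M = M`, so `M` is a union of right cosets `U * {m}`.
A right transversal of `U` meets `M` in exactly one point of each of them, whence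
`|M| = |U| · #cosets`: thus `|U|` divides `p ^ s`, and `|U| = p ^ (s - l)` forces `p ^ l` cosets.
The orbit length is the index of `U`. -/

namespace Subgroup.IsComplement

variable {G : Type*} [Group G]

theorem eq_and_eq_of_mul_eq_mul {S T : Set G} (hST : IsComplement S T) {s s' t t' : G}
    (hs : s ∈ S) (hs' : s' ∈ S) (ht : t ∈ T) (ht' : t' ∈ T) (h : s * t = s' * t') :
    s = s' ∧ t = t' := by
  have := hST.1 (a₁ := (⟨s, hs⟩, ⟨t, ht⟩)) (a₂ := (⟨s', hs'⟩, ⟨t', ht'⟩)) h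
  exact ⟨congrArg (fun x => x.1.1) this, congrArg (fun x => x.2.1) this⟩

variable {H : Subgroup G} {T M : Set G}

theorem disjoint_mul_singleton (hT : IsComplement (H : Set G) T) {r r' : G} (hr : r ∈ T)
    (hr' : r' ∈ T) (hne : r ≠ r') : Disjoint ((H : Set G) * {r}) ((H : Set G) * {r'}) := by
  rw [Set.disjoint_left]
  rintro _ ⟨h, hh, _, rfl, rfl⟩ ⟨h', hh', _, rfl, hhr⟩
  exact hne (hT.eq_and_eq_of_mul_eq_mul hh' hh hr' hr hhr).2.symm

theorem bijective_mul_inter (hT : IsComplement (H : Set G) T) (hM : (H : Set G) * M ⊆ M) :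
    Function.Bijective fun x : H × ↥(T ∩ M) =>
      (⟨x.1 * x.2, hM (Set.mul_mem_mul x.1.2 x.2.2.2)⟩ : M) := by
  refine ⟨fun x y hxy => ?_, fun m => ?_⟩
  · obtain ⟨h1, h2⟩ := hT.eq_and_eq_of_mul_eq_mul x.1.2 y.1.2 x.2.2.1 y.2.2.1
      (congrArg Subtype.val hxy)
    exact Prod.ext (Subtype.ext h1) (Subtype.ext h2)
  · obtain ⟨⟨h, r⟩, hhr⟩ := hT.2 m
    have hr : (r : G) ∈ M := by
      simpa [← hhr] using hM (Set.mul_mem_mul (H.inv_mem h.2) m.2)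
    exact ⟨(⟨h, h.2⟩, ⟨r, r.2, hr⟩), Subtype.ext hhr⟩

theorem card_mul_card_inter (hT : IsComplement (H : Set G) T) (hM : (H : Set G) * M ⊆ M) :
    Nat.card H * Nat.card ↥(T ∩ M) = Nat.card M := by
  rw [← Nat.card_prod]
  exact Nat.card_congr (Equiv.ofBijective _ (hT.bijective_mul_inter hM))

theorem iUnion_inter_mul_singleton (hT : IsComplement (H : Set G) T)
    (hM : (H : Set G) * M ⊆ M) : ⋃ r : ↥(T ∩ M), (H : Set G) * {(r : G)} = M := by
  refine subset_antisymm (Set.iUnion_subset fun r => ?_) fun m hm => ?_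
  · exact (Set.mul_subset_mul_left (Set.singleton_subset_iff.2 r.2.2)).trans hM
  · obtain ⟨⟨h, r⟩, hhr⟩ := (hT.bijective_mul_inter hM).2 ⟨m, hm⟩
    exact Set.mem_iUnion.2 ⟨r, h, h.2, r, rfl, congrArg Subtype.val hhr⟩

end Subgroup.IsComplement

theorem orbit_stabilizer_subsets_general {G : Type*} [Group G] [Finite G] (p t n s : ℕ)
    (hp : p.Prime) (hG : Nat.card G = p ^ t * n) (hs : s ≤ t)
    (M : Set G) (hM : Nat.card M = p ^ s) :
    Nat.card (MulAction.orbit G M) * Nat.card (MulAction.stabilizer G M) = p ^ t * n ∧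
    (∃! l, l ≤ s ∧ Nat.card (MulAction.stabilizer G M) = p ^ (s - l)) ∧
    ∀ l, l ≤ s → Nat.card (MulAction.stabilizer G M) = p ^ (s - l) →
      (∃ m : Fin (p ^ l) → G, (∀ i, m i ∈ M) ∧
        (∀ i j, i ≠ j →
          Disjoint ((MulAction.stabilizer G M : Set G) * {m i})
            ((MulAction.stabilizer G M : Set G) * {m j})) ∧
        M = ⋃ i, (MulAction.stabilizer G M : Set G) * {m i}) ∧
      Nat.card (MulAction.orbit G M) = p ^ (t - s + l) * n := by
  set U := MulAction.stabilizer G M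
  have horbit : Nat.card (MulAction.orbit G M) * Nat.card U = p ^ t * n := by
    rw [Nat.card_coe_set_eq, ← MulAction.index_stabilizer, mul_comm, U.card_mul_index, hG]
  obtain ⟨T, hT, -⟩ := Subgroup.exists_isComplement_right U 1
  have hUM : (U : Set G) * M ⊆ M := (MulAction.stabilizer_mul_self M).subset
  have hcard : Nat.card U * Nat.card ↥(T ∩ M) = p ^ s := hM ▸ hT.card_mul_card_inter hUM
  obtain ⟨k, hk, hUk⟩ := (Nat.dvd_prime_pow hp).1 (Dvd.intro _ hcard)
  refine ⟨horbit, ⟨s - k, ⟨s.sub_le k, by rw [Nat.sub_sub_self hk, hUk]⟩, ?_⟩, fun l hl hUl => ?_⟩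
  · rintro l ⟨hl, hUl⟩
    have := Nat.pow_right_injective hp.two_le (hUl.symm.trans hUk)
    omega
  have hpos : 0 < p ^ (s - l) := pow_pos hp.pos _
  have hTM : Nat.card ↥(T ∩ M) = p ^ l := by
    refine Nat.eq_of_mul_eq_mul_left hpos ?_
    rw [← hUl, hcard, hUl, ← pow_add, Nat.sub_add_cancel hl]
  let e : ↥(T ∩ M) ≃ Fin (p ^ l) := (Finite.equivFin _).trans (finCongr hTM)
  refine ⟨⟨fun i => e.symm i, fun i => (e.symm i).2.2, fun i j hij => ?_, ?_⟩, ?_⟩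
  · exact hT.disjoint_mul_singleton (e.symm i).2.1 (e.symm j).2.1
      (Subtype.val_injective.ne (e.symm.injective.ne hij))
  · exact (hT.iUnion_inter_mul_singleton hUM).symm.trans
      (e.symm.iSup_comp (g := fun r : ↥(T ∩ M) => (U : Set G) * {(r : G)})).symm
  · refine Nat.eq_of_mul_eq_mul_right hpos ?_
    rw [← hUl, horbit, hUl, mul_right_comm, ← pow_add]
    congr 2
    omega

/-- Orbit lengths and stabilizers for the action of `G` on its `p^s`-element subsets
by left multiplication. Let `|G| = p^t·n` with `p ∤ n`, `s ∈ [0, t]`, and `M ⊆ G`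
with `|M| = p^s`, and write `U := Stab(M)`. Then
(1) `|[M]| · |U| = p^t · n`;
(2) there is a unique `l ∈ [0, s]` with `|U| = p^(s-l)`; and for this `l`, `M` is a
disjoint union of `p^l` right cosets `U·m_i` with `m_i ∈ M`, and `|[M]| = p^(t-s+l)·n`. -/
theorem orbit_stabilizer_subsets {G : Type*} [Group G] [Finite G] (p t n s : ℕ)
    (hp : p.Prime) (hG : Nat.card G = p ^ t * n) (hn : ¬ p ∣ n) (hs : s ≤ t)
    (M : Set G) (hM : Nat.card M = p ^ s) :
    Nat.card (MulAction.orbit G M) * Nat.card (MulAction.stabilizer G M) = p ^ t * n ∧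
    (∃! l, l ≤ s ∧ Nat.card (MulAction.stabilizer G M) = p ^ (s - l)) ∧
    ∀ l, l ≤ s → Nat.card (MulAction.stabilizer G M) = p ^ (s - l) →
      (∃ m : Fin (p ^ l) → G, (∀ i, m i ∈ M) ∧
        (∀ i j, i ≠ j →
          Disjoint ((MulAction.stabilizer G M : Set G) * {m i})
            ((MulAction.stabilizer G M : Set G) * {m j})) ∧
        M = ⋃ i, (MulAction.stabilizer G M : Set G) * {m i}) ∧
      Nat.card (MulAction.orbit G M) = p ^ (t - s + l) * n :=
  orbit_stabilizer_subsets_general p t n s hp hG hs M hM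
end

section
/- Wielandt's lemma, part 1: if M ⊆ G with |M| = p^s has stabilizer of order p^s (equivalently, orbit of length p^{t−s}·n), then the orbit [M] contains exactly one element H with H a subgroup of G. -/
/-!
Translating `M` by `m⁻¹` for some `m ∈ M` gives a set `N` in the orbit of `M` with `1 ∈ N`.
Every `g` stabilizing `N` satisfies `g = g • 1 ∈ N`, so `Stab(N) ⊆ N`. Since the stabilizers in
an orbit are conjugate, `|Stab(N)| = |Stab(M)| = |M| = |N|`, which forces `Stab(N) = N`.
So `N` is a subgroup. No other set in the orbit is a subgroup: if `g • H = K` for subgroups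
`H` and `K`, then `1 ∈ K` forces `g ∈ H`, and hence `K = g • H = H`.
-/

open Pointwise MulAction

section

variable {G : Type*} [Group G]

theorem Subgroup.eq_of_coe_mem_orbit {H K : Subgroup G}
    (hKH : (K : Set G) ∈ orbit G (H : Set G)) : K = H := by
  obtain ⟨g, hg⟩ := hKH
  have hg : g • (H : Set G) = K := hg
  have hgH : g ∈ H := by
    obtain ⟨h, hh, hgh⟩ : (1 : G) ∈ g • (H : Set G) := hg ▸ K.one_mem
    have hgh : g = h⁻¹ := mul_eq_one_iff_eq_inv.mp hgh
    exact hgh ▸ H.inv_mem hh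
  exact SetLike.coe_injective (hg.symm.trans (smul_coe_set hgH))

theorem MulAction.coe_stabilizer_eq_of_one_mem {N : Set G} (hN : N.Finite) (h1 : 1 ∈ N)
    (hcard : Nat.card (stabilizer G N) = N.ncard) : (stabilizer G N : Set G) = N := by
  have hsub : (stabilizer G N : Set G) ⊆ N := fun g hg => by
    have hg1 := Set.smul_mem_smul_set (a := g) h1
    rwa [smul_eq_mul, mul_one, mem_stabilizer_iff.mp hg] at hg1
  refine Set.eq_of_subset_of_ncard_le hsub ?_ hN
  rw [← hcard, ← Nat.card_coe_set_eq]
  rfl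

theorem MulAction.existsUnique_subgroup_mem_orbit_of_card_stabilizer_eq [Finite G] {M : Set G}
    (hM : Nat.card (stabilizer G M) = Nat.card M) :
    ∃! H : Set G, H ∈ orbit G M ∧ ∃ K : Subgroup G, H = K := by
  obtain ⟨m, hm⟩ : M.Nonempty :=
    Set.nonempty_coe_sort.mp (Nat.card_pos_iff.mp (hM ▸ Nat.card_pos)).1
  set N := m⁻¹ • M
  have hNM : N ∈ orbit G M := mem_orbit M m⁻¹
  have hN : (stabilizer G N : Set G) = N := by
    refine coe_stabilizer_eq_of_one_mem (Set.toFinite N) ⟨m, hm, inv_mul_cancel m⟩ ?_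
    rw [← Nat.card_congr (stabilizerEquivStabilizer rfl).toEquiv, hM, Nat.card_coe_set_eq,
      Set.ncard_smul_set]
  refine ⟨N, ⟨hNM, _, hN.symm⟩, ?_⟩
  rintro _ ⟨hKM, K, rfl⟩
  have hKN : (K : Set G) ∈ orbit G (stabilizer G N : Set G) := by
    rwa [hN, orbit_eq_iff.mpr hNM]
  rw [Subgroup.eq_of_coe_mem_orbit hKN, hN]

end

theorem wielandt_lemma_one_general {G : Type*} [Group G] [Finite G] (p s : ℕ)
    (M : Set G) (hM : Nat.card M = p ^ s)
    (hstab : Nat.card (MulAction.stabilizer G M) = p ^ s) :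
    ∃! H : Set G, H ∈ MulAction.orbit G M ∧ ∃ K : Subgroup G, H = (K : Set G) :=
  existsUnique_subgroup_mem_orbit_of_card_stabilizer_eq (hstab.trans hM.symm)

/-- **Wielandt's lemma, part 1.** Let `|G| = p^t·n` with `p ∤ n` and `s ∈ [0, t]`.
If `M ⊆ G` with `|M| = p^s` has stabilizer of order `p^s` (under the action of `G`
on subsets by left multiplication), then the orbit `[M]` contains exactly one
element `H` that is a subgroup of `G`. -/
theorem wielandt_lemma_one {G : Type*} [Group G] [Finite G] (p t n s : ℕ)
    (hp : p.Prime) (hG : Nat.card G = p ^ t * n) (hn : ¬ p ∣ n) (hs : s ≤ t)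
    (M : Set G) (hM : Nat.card M = p ^ s)
    (hstab : Nat.card (MulAction.stabilizer G M) = p ^ s) :
    ∃! H : Set G, H ∈ MulAction.orbit G M ∧ ∃ K : Subgroup G, H = (K : Set G) :=
  wielandt_lemma_one_general p s M hM hstab
end

section
/- Wielandt's lemma, part 2: if M ⊆ G with |M| = p^s has stabilizer of order p^{s−l} for some l ∈ [1, s] (equivalently, orbit of length p^{t−s+l}·n with l ≥ 1), then M is not a subgroup of G. -/
open Pointwise

theorem not_exists_subgroup_eq_of_card_stabilizer_lt {G : Type*} [Group G] {M : Set G}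
    (h : Nat.card (MulAction.stabilizer G M) < Nat.card M) :
    ¬ ∃ K : Subgroup G, M = (K : Set G) := by
  rintro ⟨K, rfl⟩
  rw [MulAction.stabilizer_subgroup] at h
  exact lt_irrefl _ h

theorem wielandt_lemma_two_general {G : Type*} [Group G] (p s : ℕ)
    (hp : p.Prime)
    (M : Set G) (hM : Nat.card M = p ^ s) (l : ℕ) (hl1 : 1 ≤ l) (hls : l ≤ s)
    (hstab : Nat.card (MulAction.stabilizer G M) = p ^ (s - l)) :
    ¬ ∃ K : Subgroup G, M = (K : Set G) := by
  apply not_exists_subgroup_eq_of_card_stabilizer_lt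
  rw [hstab, hM]
  exact Nat.pow_lt_pow_right hp.one_lt (by omega)

/-- **Wielandt's lemma, part 2.** Let `|G| = p^t·n` with `p ∤ n` and `s ∈ [0, t]`.
If `M ⊆ G` with `|M| = p^s` has stabilizer of order `p^(s-l)` for some `l ∈ [1, s]`
(under the action of `G` on subsets by left multiplication), then `M` is not a
subgroup of `G`. -/
theorem wielandt_lemma_two {G : Type*} [Group G] [Finite G] (p t n s : ℕ)
    (hp : p.Prime) (hG : Nat.card G = p ^ t * n) (hn : ¬ p ∣ n) (hs : s ≤ t)
    (M : Set G) (hM : Nat.card M = p ^ s) (l : ℕ) (hl1 : 1 ≤ l) (hls : l ≤ s)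
    (hstab : Nat.card (MulAction.stabilizer G M) = p ^ (s - l)) :
    ¬ ∃ K : Subgroup G, M = (K : Set G) :=
  wielandt_lemma_two_general p s hp M hM l hl1 hls hstab
end

section
/- For every l ∈ [1, s] the binomial congruence b(l) ≡ b(l−1) (mod p^l) holds, i.e. C(p^{t−s+l}·n − 1, p^l − 1) ≡ C(p^{t−s+l−1}·n − 1, p^{l−1} − 1) (mod p^l). -/
/-!
Write `K = p^k`, with `K ∣ m`. In `∏_{0 < j < p K} (p m - j)` the factors with `p ∣ j`
contribute `p^(K-1) ∏_{0 < i < K} (m - i)`; taking `m = K` treats `(p K - 1)!` the same way.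
Cancelling leaves `C(p m - 1, p K - 1) · P(p K) = C(m - 1, K - 1) · P(p m)`, where
`P(x) = ∏ (x - j)` over `0 < j < p K` with `p ∤ j`. Since `p m ≡ 0 ≡ p K`, we get
`P(p m) ≡ P(p K) (mod p K)`, and `P(p K)` is prime to `p`, hence invertible modulo
`p K = p^(k+1)`.
-/

open Finset

namespace Nat

def descProdSkipMultiples (p r m : ℕ) : ℕ := ∏ j ∈ Ico 1 r with ¬p ∣ j, (m - j)

theorem Ico_one_mul_filter_dvd {p : ℕ} (hp : 0 < p) (K : ℕ) :
    {j ∈ Ico 1 (p * K) | p ∣ j} = (Ico 1 K).image (p * ·) := by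
  ext j
  simp only [mem_filter, mem_Ico, mem_image]
  constructor
  · rintro ⟨⟨hj, hjK⟩, i, rfl⟩
    exact ⟨i, ⟨Nat.pos_of_mul_pos_left hj, Nat.lt_of_mul_lt_mul_left hjK⟩, rfl⟩
  · rintro ⟨i, ⟨hi, hiK⟩, rfl⟩
    exact ⟨⟨Nat.mul_pos hp hi, Nat.mul_lt_mul_of_pos_left hiK hp⟩, dvd_mul_right p i⟩

theorem prod_Ico_one_mul_eq_prod_mul_prod_not_dvd {M : Type*} [CommMonoid M] {p : ℕ}
    (hp : 0 < p) (K : ℕ) (f : ℕ → M) :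
    ∏ j ∈ Ico 1 (p * K), f j
      = (∏ i ∈ Ico 1 K, f (p * i)) * ∏ j ∈ Ico 1 (p * K) with ¬p ∣ j, f j := by
  rw [← prod_filter_mul_prod_filter_not (Ico 1 (p * K)) (p ∣ ·), Ico_one_mul_filter_dvd hp,
    prod_image fun _ _ _ _ h => Nat.eq_of_mul_eq_mul_left hp h]

theorem descFactorial_sub_one_eq_prod_Ico (m r : ℕ) :
    (m - 1).descFactorial (r - 1) = ∏ j ∈ Ico 1 r, (m - j) := by
  rw [descFactorial_eq_prod_range, prod_Ico_eq_prod_range]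
  exact prod_congr rfl fun i _ => by omega

theorem descFactorial_mul_sub_one {p : ℕ} (hp : 0 < p) (m K : ℕ) :
    (p * m - 1).descFactorial (p * K - 1)
      = p ^ (K - 1) * (m - 1).descFactorial (K - 1) * descProdSkipMultiples p (p * K) (p * m) := by
  simp only [descFactorial_sub_one_eq_prod_Ico, prod_Ico_one_mul_eq_prod_mul_prod_not_dvd hp K,
    ← Nat.mul_sub, prod_mul_distrib, prod_const, card_Ico, descProdSkipMultiples]

theorem choose_mul_sub_one_mul_descProdSkipMultiples {p : ℕ} (hp : 0 < p) (m K : ℕ) :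
    (p * m - 1).choose (p * K - 1) * descProdSkipMultiples p (p * K) (p * K)
      = (m - 1).choose (K - 1) * descProdSkipMultiples p (p * K) (p * m) := by
  have hfact := descFactorial_mul_sub_one hp K K
  have hdesc := descFactorial_mul_sub_one hp m K
  rw [descFactorial_self, descFactorial_self] at hfact
  rw [descFactorial_eq_factorial_mul_choose, descFactorial_eq_factorial_mul_choose, hfact] at hdesc
  refine Nat.eq_of_mul_eq_mul_left (by positivity : 0 < p ^ (K - 1) * (K - 1)!) ?_
  convert hdesc using 1 <;> ring

theorem descProdSkipMultiples_modEq {p r m m' q : ℕ} (hm : r ≤ m) (hm' : r ≤ m')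
    (h : m ≡ m' [MOD q]) :
    descProdSkipMultiples p r m ≡ descProdSkipMultiples p r m' [MOD q] :=
  ModEq.prod fun j hj => by
    have hj : j < r := (mem_Ico.mp (mem_filter.mp hj).1).2
    exact h.sub_right (by omega) (by omega)

theorem Prime.coprime_descProdSkipMultiples_self {p r : ℕ} (hp : p.Prime) (hpr : p ∣ r) :
    Coprime p (descProdSkipMultiples p r r) :=
  Coprime.prod_right fun j hj => by
    obtain ⟨hj, hpj⟩ := mem_filter.mp hj
    refine hp.coprime_iff_not_dvd.mpr fun hdvd => hpj ?_
    have : j ≤ r := (mem_Ico.mp hj).2.le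
    simpa [Nat.sub_sub_self this] using Nat.dvd_sub hpr hdvd

theorem Prime.choose_mul_sub_one_modEq {p : ℕ} (hp : p.Prime) (k m : ℕ) (hm : 0 < m)
    (hdvd : p ^ k ∣ m) :
    (p * m - 1).choose (p ^ (k + 1) - 1) ≡ (m - 1).choose (p ^ k - 1) [MOD p ^ (k + 1)] := by
  rw [pow_succ']
  have hprod : descProdSkipMultiples p (p * p ^ k) (p * m)
      ≡ descProdSkipMultiples p (p * p ^ k) (p * p ^ k) [MOD p * p ^ k] := by
    have hK : p * p ^ k ≤ p * m := Nat.mul_le_mul_left p (Nat.le_of_dvd hm hdvd)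
    refine descProdSkipMultiples_modEq hK le_rfl ?_
    exact (modEq_zero_iff_dvd.mpr (mul_dvd_mul_left p hdvd)).trans
      (modEq_zero_iff_dvd.mpr dvd_rfl).symm
  have hcop : Coprime (p * p ^ k) (descProdSkipMultiples p (p * p ^ k) (p * p ^ k)) := by
    have h := hp.coprime_descProdSkipMultiples_self (dvd_mul_right p (p ^ k))
    exact h.mul_left (h.pow_left k)
  refine ModEq.cancel_right_of_coprime hcop ?_
  rw [choose_mul_sub_one_mul_descProdSkipMultiples hp.pos]
  exact hprod.mul_left _

end Nat

theorem binom_coeff_congruence_general (p t n s l : ℕ) (hp : p.Prime) (hn1 : 1 ≤ n) :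
    Nat.choose (p ^ (t - s + l) * n - 1) (p ^ l - 1)
      ≡ Nat.choose (p ^ (t - s + (l - 1)) * n - 1) (p ^ (l - 1) - 1) [MOD p ^ l] := by
  obtain _ | k := l
  · exact Nat.modEq_one
  · have hm : 0 < p ^ (t - s + k) * n := Nat.mul_pos (pow_pos hp.pos _) hn1
    have hdvd : p ^ k ∣ p ^ (t - s + k) * n :=
      (pow_dvd_pow p (Nat.le_add_left k (t - s))).mul_right n
    have h := hp.choose_mul_sub_one_modEq k _ hm hdvd
    rwa [← mul_assoc, ← pow_succ'] at h

/-- The binomial congruence `b(l) ≡ b(l-1) (mod p^l)`, where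
`b(l) = C(p^(t-s+l)·n - 1, p^l - 1)`: for a prime `p`, `p ∤ n`, `n ≥ 1`,
`s ∈ [0, t]` and `l ∈ [1, s]` one has
`C(p^(t-s+l)·n - 1, p^l - 1) ≡ C(p^(t-s+(l-1))·n - 1, p^(l-1) - 1) (mod p^l)`. -/
theorem binom_coeff_congruence (p t n s l : ℕ) (hp : p.Prime) (hn1 : 1 ≤ n)
    (hn : ¬ p ∣ n) (hs : s ≤ t) (hl1 : 1 ≤ l) (hls : l ≤ s) :
    Nat.choose (p ^ (t - s + l) * n - 1) (p ^ l - 1)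
      ≡ Nat.choose (p ^ (t - s + (l - 1)) * n - 1) (p ^ (l - 1) - 1) [MOD p ^ l] :=
  binom_coeff_congruence_general p t n s l hp hn1
end

section
/- One has C(p^t·n, p^s) = p^{t−s}·n · Σ_{k ∈ [0, s]} a_k·p^k, where a_k is the number of G-orbits of length p^{t−s+k}·n on the set of p^s-element subsets of G. In particular p^{t−s}·n divides C(p^t·n, p^s). -/
/-!
The stabilizer of a `p^s`-element subset `M` acts freely on `M` by left multiplication, so its
order divides `p^s` and is some `p^j` with `j ≤ s`; by orbit–stabilizer the orbit of `M` has
length `p^(t-j)·n = p^(t-s+k)·n` with `k = s - j`. Counting the `C(p^t·n, p^s)` subsets orbit by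
orbit and grouping the orbits by length gives the formula.
-/

open Pointwise

/-- `orbitCount G p s t n k` is the number `a_k` of orbits of length `p^(t-s+k)·n`
of the action of `G` on its `p^s`-element subsets by left multiplication. -/
noncomputable def orbitCount (G : Type*) [Group G] (p s t n k : ℕ) : ℕ :=
  Nat.card {O : Set (Set G) //
    (∃ M : Set G, Nat.card M = p ^ s ∧ O = MulAction.orbit G M) ∧
    Nat.card O = p ^ (t - s + k) * n}

open MulAction Finset

theorem card_subsets_of_card_eq_choose {α : Type*} [Fintype α] [DecidableEq α] (m : ℕ) :
    #{M : Set α | Nat.card M = m} = (Fintype.card α).choose m := by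
  rw [← Fintype.card_finset_len, ← Fintype.card_subtype]
  exact (Fintype.card_congr (Equiv.subtypeEquiv Fintype.finsetEquivSet fun A => by simp)).symm

theorem Finset.sum_eq_sum_card_filter_mul {ι κ : Type*} (T : Finset ι) (f : ι → ℕ)
    (I : Finset κ) {ℓ : κ → ℕ} (hℓ : Set.InjOn ℓ I) (hT : ∀ i ∈ T, f i ∈ I.image ℓ) :
    ∑ i ∈ T, f i = ∑ k ∈ I, #{i ∈ T | f i = ℓ k} * ℓ k := by
  classical
  rw [← sum_fiberwise_of_maps_to hT, sum_image hℓ]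
  exact sum_congr rfl fun k _ => sum_const_nat fun i hi => (mem_filter.mp hi).2

namespace MulAction

variable {G X : Type*} [Group G]

theorem card_eq_sum_card_orbits [MulAction G X] [DecidableEq (Set X)] (S : Finset X)
    (hS : ∀ g : G, ∀ x ∈ S, g • x ∈ S) :
    #S = ∑ O ∈ S.image (orbit G), Nat.card O := by
  rw [card_eq_sum_card_image (orbit G) S]
  refine sum_congr rfl fun O hO => ?_
  obtain ⟨x, hx, rfl⟩ := mem_image.mp hO
  rw [← Nat.card_eq_finsetCard]
  refine Nat.card_congr (Equiv.subtypeEquivRight fun y => ?_)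
  simp only [mem_filter, orbit_eq_iff]
  exact and_iff_right_of_imp fun ⟨g, hg⟩ => hg ▸ hS g x hx

theorem card_stabilizer_dvd_card (M : Set G) : Nat.card (stabilizer G M) ∣ Nat.card M := by
  let N : SubMulAction (stabilizer G M) G :=
    ⟨M, fun h _ hm => (mem_stabilizer_set.mp h.2 _).mpr hm⟩
  have hfree (x : N) : stabilizer (stabilizer G M) x = ⊥ :=
    (Subgroup.eq_bot_iff_forall _).mpr fun h hh =>
      Subtype.ext (mul_eq_right.mp (congrArg Subtype.val hh))
  exact Dvd.intro_left _
    ((Nat.card_congr (selfEquivOrbitsQuotientProd hfree)).trans (Nat.card_prod _ _)).symm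

theorem exists_card_orbit_eq [Finite G] {p t n s : ℕ} (hp : p.Prime)
    (hG : Nat.card G = p ^ t * n) (hs : s ≤ t) {M : Set G} (hM : Nat.card M = p ^ s) :
    ∃ k ≤ s, Nat.card (orbit G M) = p ^ (t - s + k) * n := by
  obtain ⟨j, hj, hstab⟩ := (Nat.dvd_prime_pow hp).mp (hM ▸ card_stabilizer_dvd_card M)
  have horbit : Nat.card (orbit G M) * p ^ j = p ^ (t - j) * n * p ^ j := by
    rw [Nat.card_coe_set_eq, ← index_stabilizer, ← hstab, mul_comm, Subgroup.card_mul_index,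
      hG, hstab, mul_right_comm, ← pow_add, Nat.sub_add_cancel (hj.trans hs)]
  refine ⟨s - j, Nat.sub_le s j, ?_⟩
  rw [Nat.eq_of_mul_eq_mul_right (pow_pos hp.pos j) horbit]
  congr 2
  omega

end MulAction

open Classical in
theorem orbitCount_eq_card_filter (G : Type*) [Group G] [Fintype G] (p s t n k : ℕ) :
    orbitCount G p s t n k = #{O ∈ ({M | Nat.card M = p ^ s} : Finset (Set G)).image (orbit G) |
      Nat.card (O : Set (Set G)) = p ^ (t - s + k) * n} := by
  rw [orbitCount, Nat.card_eq_fintype_card, Fintype.card_subtype]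
  congr 1
  ext O
  simp [eq_comm]

theorem choose_eq_orbit_count_sum_general {G : Type*} [Group G] [Finite G] (p t n s : ℕ)
    (hp : p.Prime) (hG : Nat.card G = p ^ t * n) (hs : s ≤ t) :
    Nat.choose (p ^ t * n) (p ^ s)
        = p ^ (t - s) * n * ∑ k ∈ Finset.range (s + 1), orbitCount G p s t n k * p ^ k ∧
      p ^ (t - s) * n ∣ Nat.choose (p ^ t * n) (p ^ s) := by
  classical
  have := Fintype.ofFinite G
  set Ω : Finset (Set G) := {M | Nat.card M = p ^ s}
  set ℓ : ℕ → ℕ := fun k => p ^ (t - s + k) * n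
  have hn : n ≠ 0 := right_ne_zero_of_mul (hG ▸ Nat.card_pos.ne')
  have hℓ : Set.InjOn ℓ (range (s + 1)) := fun i _ j _ h => by
    simpa using Nat.pow_right_injective hp.two_le (Nat.eq_of_mul_eq_mul_right hn.bot_lt h)
  have hΩ : ∀ g : G, ∀ M ∈ Ω, g • M ∈ Ω := fun g M hM => by
    rw [mem_filter_univ, Nat.card_coe_set_eq] at hM ⊢
    rwa [Set.ncard_smul_set]
  have hlength : ∀ O ∈ Ω.image (orbit G), Nat.card O ∈ (range (s + 1)).image ℓ := by
    intro O hO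
    obtain ⟨M, hM, rfl⟩ := mem_image.mp hO
    obtain ⟨k, hk, hcard⟩ := exists_card_orbit_eq hp hG hs ((mem_filter_univ M).mp hM)
    exact mem_image.mpr ⟨k, mem_range.mpr (Nat.lt_succ_of_le hk), hcard.symm⟩
  have hcount :
      (p ^ t * n).choose (p ^ s) = ∑ k ∈ range (s + 1), orbitCount G p s t n k * ℓ k := by
    rw [← hG, Nat.card_eq_fintype_card, ← card_subsets_of_card_eq_choose,
      card_eq_sum_card_orbits Ω hΩ, sum_eq_sum_card_filter_mul _ _ _ hℓ hlength]
    simp only [orbitCount_eq_card_filter, Ω, ℓ]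
  have hfactor : ∑ k ∈ range (s + 1), orbitCount G p s t n k * ℓ k
      = p ^ (t - s) * n * ∑ k ∈ range (s + 1), orbitCount G p s t n k * p ^ k := by
    rw [mul_sum]
    exact sum_congr rfl fun k _ => by simp only [ℓ, pow_add]; ring
  exact ⟨hcount.trans hfactor, hcount ▸ hfactor ▸ dvd_mul_right _ _⟩

/-- Counting the `p^s`-element subsets of `G` orbitwise:
`C(p^t·n, p^s) = p^(t-s)·n · ∑_{k ∈ [0,s]} a_k·p^k`, where `a_k` is the number of
orbits of length `p^(t-s+k)·n`.  In particular `p^(t-s)·n ∣ C(p^t·n, p^s)`. -/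
theorem choose_eq_orbit_count_sum {G : Type*} [Group G] [Finite G] (p t n s : ℕ)
    (hp : p.Prime) (hG : Nat.card G = p ^ t * n) (hn : ¬ p ∣ n) (hs : s ≤ t) :
    Nat.choose (p ^ t * n) (p ^ s)
        = p ^ (t - s) * n * ∑ k ∈ Finset.range (s + 1), orbitCount G p s t n k * p ^ k ∧
      p ^ (t - s) * n ∣ Nat.choose (p ^ t * n) (p ^ s) :=
  choose_eq_orbit_count_sum_general p t n s hp hG hs
end

section
/- If M ⊆ G satisfies 1 ∈ M, |M| = p^s and |Stab(M)| = p^s, then M is a subgroup of G; in fact M = Stab(M). Consequently, for l ∈ [0, s], the number of pairs (U, M), where U ≤ G is a subgroup with |U| = p^{s−l}, M ⊆ G with 1 ∈ M and |M| = p^s, M is a union of right cosets of U, and |Stab(M)| = p^s, equals N(s−l, s), the number of chains of subgroups U ≤ V ≤ G with |U| = p^{s−l} and |V| = p^s. -/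
/-!
Since `1 ∈ M`, every `g ∈ Stab(M)` satisfies `g = g • 1 ∈ M`, so `Stab(M) ⊆ M`, and equal
cardinalities force `M = Stab(M)`. Hence viewing `V` as a set maps chains `U ≤ V` bijectively
onto the counted pairs, with inverse `(U, M) ↦ (U, Stab(M))`: a union of right cosets of `U`
containing `1` contains `U`, and a subgroup `V ≥ U` is the union of the cosets `U g`, `g ∈ V`.
-/

open Pointwise

namespace MulAction

variable {G : Type*} [Group G] {M : Set G}

theorem stabilizer_subset_of_one_mem (h1 : (1 : G) ∈ M) : (stabilizer G M : Set G) ⊆ M := by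
  simpa using op_smul_set_stabilizer_subset h1

theorem eq_stabilizer_of_one_mem_of_card_eq (hM : M.Finite) (h1 : (1 : G) ∈ M)
    (hcard : Nat.card M = Nat.card (stabilizer G M)) : M = stabilizer G M :=
  (Set.eq_of_subset_of_ncard_le (stabilizer_subset_of_one_mem h1)
    (by rw [← Nat.card_coe_set_eq, ← Nat.card_coe_set_eq, hcard]; rfl) hM).symm

end MulAction

namespace Subgroup

variable {G : Type*} [Group G] {U V : Subgroup G}

theorem coe_subset_of_eq_iUnion_mul_singleton_of_one_mem {S M : Set G}
    (hM : M = ⋃ g ∈ S, (U : Set G) * {g}) (h1 : (1 : G) ∈ M) : (U : Set G) ⊆ M := by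
  subst hM
  obtain ⟨g, hg, h1g⟩ := Set.mem_iUnion₂.1 h1
  have hgU : g ∈ U := by
    rw [Set.mul_singleton] at h1g
    obtain ⟨u, hu, hug⟩ := h1g
    simpa [eq_inv_of_mul_eq_one_left hug] using hu
  calc (U : Set G) = U * {g} := (subgroup_mul_singleton hgU).symm
    _ ⊆ ⋃ g ∈ S, (U : Set G) * {g} := Set.subset_biUnion_of_mem (u := fun g ↦ (U : Set G) * {g}) hg

theorem iUnion_mul_singleton_of_le (h : U ≤ V) : ⋃ g ∈ (V : Set G), (U : Set G) * {g} = V := by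
  simp only [Set.mul_singleton, Set.iUnion_mul_right_image]
  refine (Set.mul_subset_iff.2 fun u hu v hv ↦ V.mul_mem (h hu) hv).antisymm ?_
  exact Set.subset_mul_right _ U.one_mem

end Subgroup

theorem stab_full_is_subgroup_and_pair_count_general {G : Type*} [Group G] [Finite G]
    (p s l : ℕ) :
    (∀ M : Set G, (1 : G) ∈ M → Nat.card M = p ^ s →
      Nat.card (MulAction.stabilizer G M) = p ^ s →
      M = (MulAction.stabilizer G M : Set G)) ∧
    Nat.card {x : Subgroup G × Set G //
        Nat.card x.1 = p ^ (s - l) ∧ (1 : G) ∈ x.2 ∧ Nat.card x.2 = p ^ s ∧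
        (∃ S : Set G, x.2 = ⋃ g ∈ S, (x.1 : Set G) * {g}) ∧
        Nat.card (MulAction.stabilizer G x.2) = p ^ s}
      = Nat.card {uv : Subgroup G × Subgroup G //
          uv.1 ≤ uv.2 ∧ Nat.card uv.1 = p ^ (s - l) ∧ Nat.card uv.2 = p ^ s} := by
  have eq_stabilizer (M : Set G) (h1 : (1 : G) ∈ M) (hM : Nat.card M = p ^ s)
      (hstab : Nat.card (MulAction.stabilizer G M) = p ^ s) : M = MulAction.stabilizer G M :=
    MulAction.eq_stabilizer_of_one_mem_of_card_eq M.toFinite h1 (hM.trans hstab.symm)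
  refine ⟨eq_stabilizer, ?_⟩
  have hinj : Function.Injective (Prod.map id SetLike.coe : Subgroup G × Subgroup G → _) :=
    Function.injective_id.prodMap SetLike.coe_injective
  refine (Nat.card_congr (Equiv.subtypeEquivRight fun ⟨U, M⟩ ↦ ?_)).trans
    (Nat.card_image_of_injective hinj _)
  constructor
  · rintro ⟨hU, h1, hM, ⟨S, hS⟩, hstab⟩
    have hMV := eq_stabilizer M h1 hM hstab
    have hUV := Subgroup.coe_subset_of_eq_iUnion_mul_singleton_of_one_mem hS h1
    rw [hMV] at hUV
    exact ⟨(U, _), ⟨hUV, hU, hstab⟩, Prod.ext rfl hMV.symm⟩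
  · rintro ⟨⟨_, V⟩, ⟨hUV, hU, hV⟩, hUVM⟩
    obtain ⟨rfl, rfl⟩ : _ = U ∧ (V : Set G) = M := Prod.mk.inj hUVM
    refine ⟨hU, V.one_mem, hV, ⟨V, (Subgroup.iUnion_mul_singleton_of_le hUV).symm⟩, ?_⟩
    rwa [MulAction.stabilizer_subgroup]

/-- Let `|G| = p^t·n` with `p ∤ n` and `s ∈ [0, t]`.
(1) If `M ⊆ G` satisfies `1 ∈ M`, `|M| = p^s` and `|Stab(M)| = p^s`, then `M` is a
subgroup of `G`; in fact `M = Stab(M)`.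
(2) Consequently, for `l ∈ [0, s]`, the number of pairs `(U, M)` with `U ≤ G` a
subgroup of order `p^(s-l)`, `M ⊆ G` with `1 ∈ M`, `|M| = p^s`, `M` a union of
right cosets of `U` and `|Stab(M)| = p^s`, equals `N(s-l, s)`, the number of chains
`U ≤ V ≤ G` with `|U| = p^(s-l)` and `|V| = p^s`. -/
theorem stab_full_is_subgroup_and_pair_count {G : Type*} [Group G] [Finite G]
    (p t n s l : ℕ) (hp : p.Prime) (hG : Nat.card G = p ^ t * n) (hn : ¬ p ∣ n)
    (hs : s ≤ t) (hl : l ≤ s) :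
    (∀ M : Set G, (1 : G) ∈ M → Nat.card M = p ^ s →
      Nat.card (MulAction.stabilizer G M) = p ^ s →
      M = (MulAction.stabilizer G M : Set G)) ∧
    Nat.card {x : Subgroup G × Set G //
        Nat.card x.1 = p ^ (s - l) ∧ (1 : G) ∈ x.2 ∧ Nat.card x.2 = p ^ s ∧
        (∃ S : Set G, x.2 = ⋃ g ∈ S, (x.1 : Set G) * {g}) ∧
        Nat.card (MulAction.stabilizer G x.2) = p ^ s}
      = Nat.card {uv : Subgroup G × Subgroup G //
          uv.1 ≤ uv.2 ∧ Nat.card uv.1 = p ^ (s - l) ∧ Nat.card uv.2 = p ^ s} :=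
  stab_full_is_subgroup_and_pair_count_general p s l
end

section
/- Let l ∈ [0, s] and let M ⊆ G with 1 ∈ M, |M| = p^s and |Stab(M)| = p^{s−l}. Then the number of elements M' of the orbit [M] = {gM : g ∈ G} with 1 ∈ M' equals p^l. -/
open Pointwise MulAction

/-!
The sets `M'` in the orbit of `M` with `1 ∈ M'` are exactly the translates `m⁻¹ • M` with `m ∈ M`.
Two elements `m, m'` of `M` give the same translate iff `m' m⁻¹ ∈ Stab(M)`, so the map
`m ↦ m⁻¹ • M` has all its fibres in bijection with `Stab(M)`, and
`|M| = #{M' ∈ [M] : 1 ∈ M'} · |Stab(M)|`.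
-/

namespace MulAction

variable {G : Type*} [Group G]

abbrev orbitMemOne (M : Set G) : Type _ :=
  {M' : Set G // M' ∈ orbit G M ∧ (1 : G) ∈ M'}

theorem one_mem_smul_set_iff {M : Set G} {c : G} : (1 : G) ∈ c • M ↔ c⁻¹ ∈ M := by
  rw [Set.mem_smul_set_iff_inv_smul_mem, smul_eq_mul, mul_one]

def invSmulOrbitMemOne (M : Set G) (m : M) : orbitMemOne M :=
  ⟨(m : G)⁻¹ • M, mem_orbit M _, one_mem_smul_set_iff.2 <| (inv_inv (m : G)).symm ▸ m.2⟩

def fiberInvSmulOrbitMemOneEquiv (M : Set G) (c : G) (hc : (1 : G) ∈ c • M) :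
    {m : M // invSmulOrbitMemOne M m = ⟨c • M, mem_orbit M c, hc⟩} ≃ stabilizer G M where
  toFun m := ⟨(m : G) * c, by
    rw [mem_stabilizer_iff, mul_smul, smul_eq_iff_eq_inv_smul]
    exact (congrArg Subtype.val m.2).symm⟩
  invFun h := ⟨⟨(h : G) * c⁻¹, by
    have hhc := Set.smul_mem_smul_set (a := (h : G)) (one_mem_smul_set_iff.1 hc)
    rwa [mem_stabilizer_iff.1 h.2] at hhc⟩, by
    have hh : (h : G)⁻¹ • M = M := inv_smul_eq_iff.2 (mem_stabilizer_iff.1 h.2).symm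
    apply Subtype.ext
    change ((h : G) * c⁻¹)⁻¹ • M = c • M
    rw [mul_inv_rev, inv_inv, mul_smul, hh]⟩
  left_inv m := by ext; simp
  right_inv h := by ext; simp

theorem card_eq_card_orbitMemOne_mul_card_stabilizer (M : Set G) :
    Nat.card M = Nat.card (orbitMemOne M) * Nat.card (stabilizer G M) := by
  have fiberEquiv (y : orbitMemOne M) :
      Nonempty ({m : M // invSmulOrbitMemOne M m = y} ≃ stabilizer G M) := by
    obtain ⟨_, ⟨c, rfl⟩, hc⟩ := y
    exact ⟨fiberInvSmulOrbitMemOneEquiv M c hc⟩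
  rw [← Nat.card_prod]
  exact Nat.card_congr <| (Equiv.sigmaFiberEquiv (invSmulOrbitMemOne M)).symm.trans <|
    (Equiv.sigmaCongrRight fun y => (fiberEquiv y).some).trans (Equiv.sigmaEquivProd _ _)

end MulAction

theorem card_orbit_mem_one_general {G : Type*} [Group G] (p s l : ℕ)
    (hp : p.Prime) (hl : l ≤ s) (M : Set G)
    (hM : Nat.card M = p ^ s)
    (hstab : Nat.card (MulAction.stabilizer G M) = p ^ (s - l)) :
    Nat.card {M' : Set G // M' ∈ MulAction.orbit G M ∧ (1 : G) ∈ M'} = p ^ l := by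
  have hcard := card_eq_card_orbitMemOne_mul_card_stabilizer M
  rw [hM, hstab, ← Nat.pow_sub_mul_pow p hl, mul_comm] at hcard
  exact (Nat.eq_of_mul_eq_mul_right (pow_pos hp.pos _) hcard).symm

/-- Let `|G| = p^t·n` with `p ∤ n`, `s ∈ [0, t]` and `l ∈ [0, s]`.  If `M ⊆ G`
satisfies `1 ∈ M`, `|M| = p^s` and `|Stab(M)| = p^(s-l)`, then the orbit
`[M] = {gM : g ∈ G}` contains exactly `p^l` elements containing `1`. -/
theorem card_orbit_mem_one {G : Type*} [Group G] [Finite G] (p t n s l : ℕ)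
    (hp : p.Prime) (hG : Nat.card G = p ^ t * n) (hn : ¬ p ∣ n)
    (hs : s ≤ t) (hl : l ≤ s) (M : Set G) (h1 : (1 : G) ∈ M)
    (hM : Nat.card M = p ^ s)
    (hstab : Nat.card (MulAction.stabilizer G M) = p ^ (s - l)) :
    Nat.card {M' : Set G // M' ∈ MulAction.orbit G M ∧ (1 : G) ∈ M'} = p ^ l :=
  card_orbit_mem_one_general p s l hp hl M hM hstab
end

section
/- For every l ∈ [0, s], the number a_l of G-orbits of length p^{t−s+l}·n on p^s-element subsets of G equals (1/p^l) times the number of subsets M ⊆ G with 1 ∈ M, |M| = p^s and |Stab(M)| = p^{s−l}. -/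
/-!
Each orbit of `p^s`-subsets whose stabilizer has order `p^(s-l)` contains exactly `p^l` sets
through `1`: the translates of `M` through `1` are the sets `x⁻¹ • M` with `x ∈ M`, and
`x⁻¹ • M = y⁻¹ • M` exactly when `y` lies in the right coset `Stab(M) x`, so there are
`|M| / |Stab(M)|` of them. By orbit–stabilizer, the orbits of length `p^(t-s+l)·n` are exactly
those whose stabilizers have order `p^(s-l)`, and counting the pointed sets orbit by orbit gives
the formula.
-/

open Pointwise

open MulAction

theorem Nat.card_eq_mul_card_of_card_fiber {α β : Type*} [Finite α] [Finite β] (f : α → β)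
    {c : ℕ} (h : ∀ b, Nat.card {a // f a = b} = c) : Nat.card α = c * Nat.card β := by
  have := Fintype.ofFinite β
  rw [← Nat.card_congr (Equiv.sigmaFiberEquiv f), Nat.card_sigma]
  simp [h, mul_comm]

section Action

variable {G α : Type*} [Group G] [MulAction G α]

theorem MulAction.natCard_orbit_mul_natCard_stabilizer (a : α) :
    Nat.card (orbit G a) * Nat.card (stabilizer G a) = Nat.card G := by
  rw [Nat.card_congr (orbitEquivQuotientStabilizer G a), ← Subgroup.index_eq_card,
    Subgroup.index_mul_card]

theorem MulAction.natCard_stabilizer_smul (g : G) (a : α) :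
    Nat.card (stabilizer G (g • a)) = Nat.card (stabilizer G a) :=
  (Nat.card_congr (stabilizerEquivStabilizer rfl).toEquiv).symm

theorem MulAction.inv_smul_eq_smul_iff_mul_mem_stabilizer {x g : G} {a : α} :
    x⁻¹ • a = g • a ↔ x * g ∈ stabilizer G a := by
  rw [mem_stabilizer_iff, mul_smul, inv_smul_eq_iff, eq_comm]

end Action

section PointedSubsets

variable {G : Type*} [Group G]

theorem card_pointed_translates_mul_card_stabilizer [Finite G] (M : Set G) :
    Nat.card {N : Set G // (1 : G) ∈ N ∧ N ∈ orbit G M} * Nat.card (stabilizer G M) =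
      Nat.card M := by
  let f : M → {N : Set G // (1 : G) ∈ N ∧ N ∈ orbit G M} := fun x =>
    ⟨(x : G)⁻¹ • M, by simp [Set.mem_smul_set_iff_inv_smul_mem], mem_orbit M _⟩
  rw [mul_comm, Nat.card_eq_mul_card_of_card_fiber f]
  rintro ⟨_, h1, g, rfl⟩
  have hg : g⁻¹ ∈ M := by simpa [Set.mem_smul_set_iff_inv_smul_mem] using h1
  refine Nat.card_congr
    { toFun := fun x => ⟨x.1 * g,
        inv_smul_eq_smul_iff_mul_mem_stabilizer.1 (congrArg Subtype.val x.2)⟩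
      invFun := fun h => ⟨⟨h * g⁻¹, ?_⟩, Subtype.ext ?_⟩
      left_inv := fun x => by simp
      right_inv := fun h => by simp }
  · simpa [← smul_eq_mul, mem_stabilizer_iff.1 h.2] using Set.smul_mem_smul_set (a := h.1) hg
  · exact inv_smul_eq_smul_iff_mul_mem_stabilizer.2 (by simp)

theorem card_pointed_eq_mul_card_orbits [Finite G] {P : Set G → Prop}
    (hP : ∀ (g : G) M, P M → P (g • M)) {c : ℕ}
    (hc : ∀ M, P M → Nat.card M = c * Nat.card (stabilizer G M)) :
    Nat.card {M : Set G // (1 : G) ∈ M ∧ P M} =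
      c * Nat.card {O : Set (Set G) // ∃ M, P M ∧ O = orbit G M} := by
  refine Nat.card_eq_mul_card_of_card_fiber (fun M => ⟨orbit G M.1, M.1, M.2.2, rfl⟩) ?_
  rintro ⟨_, M₀, hM₀, rfl⟩
  have hfiber : Nat.card {N : Set G // (1 : G) ∈ N ∧ N ∈ orbit G M₀} = c := by
    have := card_pointed_translates_mul_card_stabilizer M₀
    rw [hc M₀ hM₀] at this
    exact Nat.eq_of_mul_eq_mul_right Nat.card_pos this
  refine (Nat.card_congr ?_).trans hfiber
  exact
    { toFun := fun M => ⟨M.1.1, M.1.2.1, orbit_eq_iff.1 (congrArg Subtype.val M.2)⟩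
      invFun := fun N => ⟨⟨N.1, N.2.1, by obtain ⟨g, hg⟩ := N.2.2; exact hg ▸ hP g M₀ hM₀⟩,
        Subtype.ext (orbit_eq_iff.2 N.2.2)⟩
      left_inv := fun _ => rfl
      right_inv := fun _ => rfl }

end PointedSubsets

theorem orbitCount_eq_card_pointed_subsets_general {G : Type*} [Group G] [Finite G]
    (p t n s l : ℕ) (hG : Nat.card G = p ^ t * n)
    (hs : s ≤ t) (hl : l ≤ s) :
    p ^ l * orbitCount G p s t n l =
      Nat.card {M : Set G // (1 : G) ∈ M ∧ Nat.card M = p ^ s ∧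
        Nat.card (MulAction.stabilizer G M) = p ^ (s - l)} := by
  have orbit_length_iff (M : Set G) :
      Nat.card (orbit G M) = p ^ (t - s + l) * n ↔
        Nat.card (stabilizer G M) = p ^ (s - l) := by
    have h := natCard_orbit_mul_natCard_stabilizer (G := G) M
    rw [hG, show t = (t - s + l) + (s - l) by omega, pow_add, mul_right_comm] at h
    constructor
    · intro ho
      rw [ho] at h
      exact Nat.eq_of_mul_eq_mul_left (ho ▸ (nonempty_orbit M).natCard_pos (Set.toFinite _)) h
    · intro hst
      rw [hst] at h
      exact Nat.eq_of_mul_eq_mul_right (hst ▸ Nat.card_pos) h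
  rw [card_pointed_eq_mul_card_orbits
    (fun g M ⟨hM, hst⟩ => ⟨(Set.natCard_smul_set g M).trans hM,
      (natCard_stabilizer_smul g M).trans hst⟩)
    (fun M ⟨hM, hst⟩ => by rw [hM, hst, ← pow_add, Nat.add_sub_cancel' hl])]
  congr 1
  refine Nat.card_congr (Equiv.subtypeEquivRight fun O => ?_)
  constructor
  · rintro ⟨⟨M, hM, rfl⟩, hO⟩
    exact ⟨M, ⟨hM, (orbit_length_iff M).1 hO⟩, rfl⟩
  · rintro ⟨M, ⟨hM, hst⟩, rfl⟩
    exact ⟨⟨M, hM, rfl⟩, (orbit_length_iff M).2 hst⟩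

/-- For every `l ∈ [0, s]`, the number `a_l` of orbits of length `p^(t-s+l)·n` equals
`1/p^l` times the number of subsets `M ⊆ G` with `1 ∈ M`, `|M| = p^s` and
`|Stab(M)| = p^(s-l)` (stated multiplied through by `p^l`). -/
theorem orbitCount_eq_card_pointed_subsets {G : Type*} [Group G] [Finite G]
    (p t n s l : ℕ) (hp : p.Prime) (hG : Nat.card G = p ^ t * n) (hn : ¬ p ∣ n)
    (hs : s ≤ t) (hl : l ≤ s) :
    p ^ l * orbitCount G p s t n l =
      Nat.card {M : Set G // (1 : G) ∈ M ∧ Nat.card M = p ^ s ∧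
        Nat.card (MulAction.stabilizer G M) = p ^ (s - l)} :=
  orbitCount_eq_card_pointed_subsets_general p t n s l hG hs hl
end

section
/- Let l ∈ [0, s] and k ∈ [0, l]. The number of pairs (U, M), where U ≤ G with |U| = p^{s−l}, M ⊆ G with 1 ∈ M, |M| = p^s, |Stab(M)| = p^{s−k}, and M is a union of right cosets of U, equals Σ_{I ⊆ [0, k], k ∈ I} (-1)^{|I|+1} · b(min I) · N(s − (I ∪ {l})). -/
/-!
Write `T = Stab(M)`. Since `M` is a union of right cosets of `T`, `|T|` divides `|M| = p^s`, so
`|T| = p^(s-j)` for some `j ≤ s`. The sets `M ∋ 1` of order `p^s` stabilized by a subgroup `V` of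
order `p^(s-c)` correspond to the subsets of `G ⧸ V` of size `p^c` containing the trivial coset,
so there are `b(c)` of them. Counting pairs (chain, `M`) in two ways gives
`b(min I) · N(s - (I ∪ {l})) = ∑_M N_T(s - (I ∪ {l}))`, where `N_T` counts the chains below `T`.

For fixed `M` the alternating sum over `I` collapses. If `j > k` no chain reaches index `k`. If
`j < k`, toggling `j ∈ I` is a sign-reversing bijection, because `T` is the only subgroup of order
`p^(s-j)` below `T`. If `j = k`, only `I = {k}` survives and counts the subgroups `U ≤ T` of order
`p^(s-l)`, that is, the `U` for which `M` is a union of right cosets of `U`.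
-/

open Pointwise

/-- `chainCount G p s I` is the number `N(s - I)` of chains of `p`-subgroups of `G`:
for `I = {c₁ > c₂ > … > c_k} ⊆ [0, s]`, this counts tuples `U₁ ≤ U₂ ≤ … ≤ U_k ≤ G`
with `|U_i| = p^(s - c_i)`. -/
noncomputable def chainCount (G : Type*) [Group G] (p s : ℕ) (I : Finset ℕ) : ℕ :=
  Nat.card {f : I → Subgroup G //
    (∀ i j : I, (i : ℕ) ≤ (j : ℕ) → f j ≤ f i) ∧
    ∀ i : I, Nat.card (f i) = p ^ (s - (i : ℕ))}

/-- `bCoeff p t s n k` is the binomial coefficient `b(k) = C(p^(t-s+k)·n - 1, p^k - 1)`,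
as an integer. -/
def bCoeff (p t s n k : ℕ) : ℤ :=
  (Nat.choose (p ^ (t - s + k) * n - 1) (p ^ k - 1) : ℤ)

open MulAction

lemma Nat.card_subtype_prod_and {α β : Type*} [Fintype α] [Finite β] (P : α → Prop)
    [DecidablePred P] (Q : α → β → Prop) :
    Nat.card {x : α × β // P x.1 ∧ Q x.1 x.2}
      = ∑ a ∈ Finset.univ.filter P, Nat.card {b // Q a b} := by
  rw [Nat.card_congr (Equiv.subtypeProdEquivSigmaSubtype fun a b => P a ∧ Q a b), Nat.card_sigma,
    Finset.sum_filter]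
  refine Finset.sum_congr rfl fun a _ => ?_
  split_ifs with ha <;> simp [ha]

lemma Nat.card_subtype_prod_and_eq_mul {α β : Type*} [Finite α] [Finite β] (P : α → Prop)
    (Q : α → β → Prop) {c : ℕ} (hc : ∀ a, P a → Nat.card {b // Q a b} = c) :
    Nat.card {x : α × β // P x.1 ∧ Q x.1 x.2} = Nat.card {a // P a} * c := by
  classical
  have := Fintype.ofFinite α
  rw [Nat.card_subtype_prod_and, Finset.sum_congr rfl fun a ha => hc a (Finset.mem_filter.1 ha).2,
    Finset.sum_const, smul_eq_mul, Nat.card_eq_fintype_card, Fintype.card_subtype]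

lemma Nat.card_sets_mem_card_eq_choose {α : Type*} [Fintype α] (a : α) {m : ℕ} (hm : 1 ≤ m) :
    Nat.card {A : Set α // a ∈ A ∧ Nat.card A = m} = (Fintype.card α - 1).choose (m - 1) := by
  classical
  have e : {A : Set α // a ∈ A ∧ Nat.card A = m} ≃ {B : Finset α // a ∈ B ∧ B.card = m} :=
    (Equiv.subtypeEquiv Fintype.finsetEquivSet fun B => by
      simp [Fintype.finsetEquivSet]).symm
  rw [Nat.card_congr e, Nat.card_eq_fintype_card, Fintype.card_subtype]
  have := Finset.card_filter_powersetCard_subset {a} Finset.univ m (by simp) (by simpa using hm)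
  rw [Finset.card_singleton, Finset.card_univ] at this
  rw [← this]
  congr 1
  ext B
  simp [and_comm]

section Stabilizer

variable {G : Type*} [Group G]

lemma Subgroup.le_stabilizer_iff_mul_eq (V : Subgroup G) (M : Set G) :
    V ≤ stabilizer G M ↔ (V : Set G) * M = M := by
  rw [le_stabilizer_iff_smul_le]
  refine ⟨fun h => (Set.mul_subset_iff.2 fun g hg x hx => h g hg ⟨x, hx, rfl⟩).antisymm
    (Set.subset_mul_right M V.one_mem), fun h g hg => (Set.smul_set_subset_mul hg).trans h.le⟩

lemma Subgroup.le_stabilizer_iff_inv_mul_eq (V : Subgroup G) (M : Set G) :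
    V ≤ stabilizer G M ↔ M⁻¹ * (V : Set G) = M⁻¹ := by
  rw [le_stabilizer_iff_mul_eq, ← inv_inj, mul_inv_rev, inv_coe_set]

lemma Subgroup.exists_iUnion_mul_singleton_iff (U : Subgroup G) (M : Set G) :
    (∃ S : Set G, M = ⋃ g ∈ S, (U : Set G) * {g}) ↔ U ≤ stabilizer G M := by
  simp_rw [le_stabilizer_iff_mul_eq, Set.mul_singleton, Set.iUnion_mul_right_image]
  refine ⟨fun ⟨S, hS⟩ => ?_, fun h => ⟨M, h.symm⟩⟩
  rw [hS, ← mul_assoc, ← U.coe_toSubmonoid, Submonoid.coe_mul_self_eq]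

/-- `V ≤ Stab(M)` says that `M` is a union of right cosets `V g`, so `M⁻¹` is a union of left
cosets. -/
def Subgroup.stabilizedSetsEquiv (V : Subgroup G) :
    Set (G ⧸ V) ≃ {M : Set G // V ≤ stabilizer G M} where
  toFun A := ⟨(QuotientGroup.mk ⁻¹' A)⁻¹, by
    rw [le_stabilizer_iff_inv_mul_eq, inv_inv, ← QuotientGroup.preimage_image_mk_eq_mul,
      Set.image_preimage_eq _ QuotientGroup.mk_surjective]⟩
  invFun M := QuotientGroup.mk '' M.1⁻¹
  left_inv A := by
    dsimp only
    rw [inv_inv, Set.image_preimage_eq _ QuotientGroup.mk_surjective]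
  right_inv M := Subtype.ext <| by
    dsimp only
    rw [QuotientGroup.preimage_image_mk_eq_mul, (le_stabilizer_iff_inv_mul_eq V M.1).1 M.2,
      inv_inv]

lemma Subgroup.one_mem_stabilizedSetsEquiv_iff (V : Subgroup G) (A : Set (G ⧸ V)) :
    1 ∈ (V.stabilizedSetsEquiv A).1 ↔ ((1 : G) : G ⧸ V) ∈ A := by
  simp [stabilizedSetsEquiv]

lemma Subgroup.card_stabilizedSetsEquiv (V : Subgroup G) (A : Set (G ⧸ V)) :
    Nat.card (V.stabilizedSetsEquiv A).1 = Nat.card V * Nat.card A := by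
  rw [stabilizedSetsEquiv, Equiv.coe_fn_mk, Nat.card_coe_set_eq, Set.ncard_inv,
    ← Nat.card_coe_set_eq, Nat.card_congr (QuotientGroup.preimageMkEquivSubgroupProdSet V A),
    Nat.card_prod]

lemma Subgroup.card_dvd_of_le_stabilizer {V : Subgroup G} {M : Set G}
    (h : V ≤ stabilizer G M) : Nat.card V ∣ Nat.card M := by
  obtain ⟨A, hA⟩ := V.stabilizedSetsEquiv.surjective ⟨M, h⟩
  exact ⟨Nat.card A, by rw [← V.card_stabilizedSetsEquiv, hA]⟩

lemma Subgroup.card_sets_le_stabilizer_eq_choose [Finite G] (V : Subgroup G) {m : ℕ} (hm : 1 ≤ m) :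
    Nat.card {M : Set G // 1 ∈ M ∧ Nat.card M = Nat.card V * m ∧ V ≤ stabilizer G M}
      = (V.index - 1).choose (m - 1) := by
  have := Fintype.ofFinite (G ⧸ V)
  have hV : Nat.card V ≠ 0 := Nat.card_pos.ne'
  rw [Subgroup.index, Nat.card_eq_fintype_card (α := G ⧸ V),
    ← Nat.card_sets_mem_card_eq_choose _ hm]
  symm
  refine Nat.card_congr <| (Equiv.subtypeEquiv V.stabilizedSetsEquiv fun A => ?_).trans
    (Equiv.subtypeSubtypeEquivSubtype fun h => h.2.2)
  rw [one_mem_stabilizedSetsEquiv_iff, card_stabilizedSetsEquiv, mul_right_inj' hV]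
  exact ⟨fun h => ⟨h.1, h.2, (V.stabilizedSetsEquiv A).2⟩, fun h => ⟨h.1, h.2.1⟩⟩

end Stabilizer

section Chains

variable {G : Type*} [Group G] (p s : ℕ)

noncomputable def chainCountBelow (T : Subgroup G) (I : Finset ℕ) : ℕ :=
  Nat.card {f : I → Subgroup G //
    ((∀ i j : I, (i : ℕ) ≤ (j : ℕ) → f j ≤ f i) ∧ ∀ i : I, Nat.card (f i) = p ^ (s - (i : ℕ))) ∧
    ∀ i, f i ≤ T}

lemma chainCountBelow_singleton (T : Subgroup G) (l : ℕ) :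
    chainCountBelow p s T {l} = Nat.card {U : Subgroup G // Nat.card U = p ^ (s - l) ∧ U ≤ T} :=
  Nat.card_congr <| (Equiv.funUnique _ _).subtypeEquiv fun f => by simp [Unique.forall_iff]

variable {p s}

lemma chainCountBelow_eq_zero_of_lt (hp : 1 < p) {T : Subgroup G} {j : ℕ}
    (hT : Nat.card T = p ^ (s - j)) (hj : j ≤ s) {I : Finset ℕ} {i : ℕ} (hi : i ∈ I)
    (hij : i < j) : chainCountBelow p s T I = 0 := by
  refine Nat.card_eq_zero.2 <| .inl ⟨fun ⟨f, ⟨_, hcard⟩, hle⟩ => ?_⟩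
  have : p ^ (s - i) ∣ p ^ (s - j) := hcard ⟨i, hi⟩ ▸ hT ▸ Subgroup.card_dvd_of_le (hle ⟨i, hi⟩)
  rw [Nat.pow_dvd_pow_iff_le_right hp] at this
  omega

/-- A chain below `T` through indices `≥ j` extends uniquely by `T` itself at index `j`. -/
lemma chainCountBelow_insert_of_forall_le [Finite G] {T : Subgroup G} {j : ℕ}
    (hT : Nat.card T = p ^ (s - j)) {I : Finset ℕ} (hI : ∀ i ∈ I, j ≤ i) :
    chainCountBelow p s T (insert j I) = chainCountBelow p s T I := by
  have eq_of_not_mem : ∀ i : (insert j I : Finset ℕ), (i : ℕ) ∉ I → (i : ℕ) = j := fun i hi =>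
    (Finset.mem_insert.1 i.2).resolve_right hi
  refine Nat.card_congr
    { toFun := fun f => ⟨fun i => f.1 ⟨i, Finset.mem_insert_of_mem i.2⟩,
        ⟨⟨fun i i' h => f.2.1.1 _ _ h, fun i => f.2.1.2 _⟩, fun i => f.2.2 _⟩⟩
      invFun := fun f => ⟨fun i => if h : (i : ℕ) ∈ I then f.1 ⟨i, h⟩ else T, ⟨⟨?_, ?_⟩, ?_⟩⟩
      left_inv := ?_
      right_inv := fun f => by simp }
  · intro i i' hii'
    dsimp only
    split_ifs with hi' hi hi
    · exact f.2.1.1 ⟨i, hi⟩ ⟨i', hi'⟩ hii'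
    · exact f.2.2 _
    · have : (i : ℕ) = i' := le_antisymm hii' ((eq_of_not_mem i' hi').trans_le (hI i hi))
      exact absurd (this ▸ hi) hi'
    · exact le_rfl
  · intro i
    dsimp only
    split_ifs with h
    · exact f.2.1.2 ⟨i, h⟩
    · rw [hT, eq_of_not_mem i h]
  · intro i
    dsimp only
    split_ifs with h
    · exact f.2.2 _
    · exact le_rfl
  · rintro ⟨f, ⟨hchain, hcard⟩, hle⟩
    ext1
    funext i
    dsimp only
    split_ifs with h
    · rfl
    · have hi := eq_of_not_mem i h
      exact (Subgroup.eq_of_le_of_card_ge (hle i) (by rw [hcard, hT, hi])).symm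

lemma chainCountBelow_insert [Finite G] (hp : 1 < p) {T : Subgroup G} {j : ℕ}
    (hT : Nat.card T = p ^ (s - j)) (hj : j ≤ s) (I : Finset ℕ) :
    chainCountBelow p s T (insert j I) = chainCountBelow p s T I := by
  by_cases h : ∃ i ∈ I, i < j
  · obtain ⟨i, hi, hij⟩ := h
    rw [chainCountBelow_eq_zero_of_lt hp hT hj hi hij,
      chainCountBelow_eq_zero_of_lt hp hT hj (Finset.mem_insert_of_mem hi) hij]
  · push Not at h
    exact chainCountBelow_insert_of_forall_le hT h

lemma sum_neg_one_pow_mul_chainCountBelow_of_lt [Finite G] (hp : 1 < p) {T : Subgroup G}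
    {j k : ℕ} (hT : Nat.card T = p ^ (s - j)) (hj : j ≤ s) (hjk : j < k) (l : ℕ) :
    ∑ I ∈ (Finset.range (k + 1)).powerset.filter (fun I => k ∈ I),
        (-1 : ℤ) ^ (I.card + 1) * (chainCountBelow p s T (insert l I) : ℤ) = 0 := by
  have toggle : ∀ I, j ∉ I → (-1 : ℤ) ^ ((insert j I).card + 1) *
      (chainCountBelow p s T (insert l (insert j I)) : ℤ)
        = -((-1 : ℤ) ^ (I.card + 1) * chainCountBelow p s T (insert l I)) := fun I hI => by
    rw [Finset.card_insert_of_notMem hI, Finset.insert_comm, chainCountBelow_insert hp hT hj]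
    ring
  refine Finset.sum_involution (fun I _ => if j ∈ I then I.erase j else insert j I)
    (fun I _ => ?_) (fun I _ _ => ?_) (fun I hI => ?_) (fun I _ => ?_)
  · split_ifs with h
    · obtain ⟨I', hI', rfl⟩ : ∃ I', j ∉ I' ∧ insert j I' = I :=
        ⟨_, Finset.notMem_erase j I, Finset.insert_erase h⟩
      rw [Finset.erase_insert hI', toggle I' hI', neg_add_cancel]
    · rw [toggle I h, add_neg_cancel]
  · split_ifs with h
    · exact fun he => Finset.erase_eq_self.1 he h
    · exact fun he => h (Finset.insert_eq_self.1 he)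
  · simp only [Finset.mem_filter, Finset.mem_powerset] at hI ⊢
    split_ifs with h
    · exact ⟨(Finset.erase_subset _ _).trans hI.1, Finset.mem_erase.2 ⟨hjk.ne', hI.2⟩⟩
    · exact ⟨Finset.insert_subset (by simp; omega) hI.1, Finset.mem_insert_of_mem hI.2⟩
  · split_ifs with h h' h'
    · simp at h'
    · exact Finset.insert_erase h
    · exact Finset.erase_insert h
    · simp at h'

theorem sum_neg_one_pow_mul_chainCountBelow [Finite G] (hp : 1 < p) {T : Subgroup G} {j : ℕ}
    (hT : Nat.card T = p ^ (s - j)) (hj : j ≤ s) (k l : ℕ) :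
    ∑ I ∈ (Finset.range (k + 1)).powerset.filter (fun I => k ∈ I),
        (-1 : ℤ) ^ (I.card + 1) * (chainCountBelow p s T (insert l I) : ℤ)
      = if j = k then (chainCountBelow p s T {l} : ℤ) else 0 := by
  have mem_iff : ∀ {I : Finset ℕ}, I ∈ (Finset.range (k + 1)).powerset.filter (fun I => k ∈ I)
      ↔ I ⊆ Finset.range (k + 1) ∧ k ∈ I := by simp
  rcases lt_trichotomy j k with hjk | rfl | hkj
  · rw [if_neg hjk.ne, sum_neg_one_pow_mul_chainCountBelow_of_lt hp hT hj hjk]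
  · rw [if_pos rfl, Finset.sum_eq_single {j}]
    · rw [Finset.card_singleton, Finset.pair_comm, chainCountBelow_insert hp hT hj]
      ring
    · intro I hI hne
      obtain ⟨i, hi, hij⟩ : ∃ i ∈ I, i < j := by
        by_contra! h
        refine hne (Finset.eq_singleton_iff_unique_mem.2 ⟨(mem_iff.1 hI).2, fun i hi => ?_⟩)
        have := Finset.mem_range.1 ((mem_iff.1 hI).1 hi)
        have := h i hi
        omega
      rw [chainCountBelow_eq_zero_of_lt hp hT hj (Finset.mem_insert_of_mem hi) hij, Nat.cast_zero,
        mul_zero]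
    · exact fun h => absurd (mem_iff.2 ⟨by simp, by simp⟩) h
  · rw [if_neg hkj.ne']
    refine Finset.sum_eq_zero fun I hI => ?_
    rw [chainCountBelow_eq_zero_of_lt hp hT hj (Finset.mem_insert_of_mem (mem_iff.1 hI).2) hkj,
      Nat.cast_zero, mul_zero]

end Chains

section Counting

open scoped Classical

variable {G : Type*} [Group G] [Fintype G] {p : ℕ}

theorem bCoeff_mul_chainCount (hp : 0 < p) {t s n : ℕ} (hG : Nat.card G = p ^ t * n)
    (hst : s ≤ t) {J : Finset ℕ} {m : ℕ} (hmJ : m ∈ J) (hm : ∀ i ∈ J, m ≤ i) (hms : m ≤ s) :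
    bCoeff p t s n m * chainCount G p s J
      = ∑ M ∈ Finset.univ.filter (fun M : Set G => (1 : G) ∈ M ∧ Nat.card M = p ^ s),
          (chainCountBelow p s (stabilizer G M) J : ℤ) := by
  have fiber : ∀ f : J → Subgroup G, ((∀ i j : J, (i : ℕ) ≤ j → f j ≤ f i) ∧
      ∀ i : J, Nat.card (f i) = p ^ (s - i)) →
      Nat.card {M : Set G // ((1 : G) ∈ M ∧ Nat.card M = p ^ s) ∧ ∀ i, f i ≤ stabilizer G M}
        = (p ^ (t - s + m) * n - 1).choose (p ^ m - 1) := by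
    rintro f ⟨hchain, hcard⟩
    set V := f ⟨m, hmJ⟩
    have hV : Nat.card V = p ^ (s - m) := hcard _
    have hindex : V.index = p ^ (t - s + m) * n := by
      have := V.card_mul_index
      rw [hV, hG, show t = (s - m) + (t - s + m) by omega, pow_add, mul_assoc] at this
      exact Nat.eq_of_mul_eq_mul_left (pow_pos hp _) this
    rw [← hindex, ← V.card_sets_le_stabilizer_eq_choose (Nat.one_le_pow _ _ hp)]
    refine Nat.card_congr (Equiv.subtypeEquivRight fun M => ?_)
    rw [hV, ← pow_add, Nat.sub_add_cancel hms]
    exact ⟨fun h => ⟨h.1.1, h.1.2, h.2 _⟩,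
      fun h => ⟨⟨h.1, h.2.1⟩, fun i => (hchain _ _ (hm i i.2)).trans h.2.2⟩⟩
  have := Nat.card_subtype_prod_and_eq_mul _ _ fiber
  rw [bCoeff, mul_comm, chainCount, ← Nat.cast_mul, ← this, ← Nat.cast_sum]
  congr 1
  refine (Nat.card_congr ((Equiv.prodComm _ _).subtypeEquiv fun x => ?_)).trans
    (Nat.card_subtype_prod_and _ _)
  exact ⟨fun h => ⟨h.2.1, h.1, h.2.2⟩, fun h => ⟨h.2.1, h.1, h.2.2⟩⟩

lemma card_pairs_eq_sum_chainCountBelow (p s l k : ℕ) :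
    Nat.card {x : Subgroup G × Set G //
        Nat.card x.1 = p ^ (s - l) ∧ (1 : G) ∈ x.2 ∧ Nat.card x.2 = p ^ s ∧
        Nat.card (stabilizer G x.2) = p ^ (s - k) ∧
        ∃ S : Set G, x.2 = ⋃ g ∈ S, (x.1 : Set G) * {g}}
      = ∑ M ∈ Finset.univ.filter (fun M : Set G => (1 : G) ∈ M ∧ Nat.card M = p ^ s),
          if Nat.card (stabilizer G M) = p ^ (s - k) then
            chainCountBelow p s (stabilizer G M) {l} else 0 := by
  have fiber : ∀ M : Set G, (if Nat.card (stabilizer G M) = p ^ (s - k) then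
      chainCountBelow p s (stabilizer G M) {l} else 0) =
        Nat.card {U : Subgroup G // Nat.card (stabilizer G M) = p ^ (s - k) ∧
          Nat.card U = p ^ (s - l) ∧ U ≤ stabilizer G M} := by
    intro M
    rw [chainCountBelow_singleton]
    split_ifs with h
    · simp only [h, true_and]
    · simp only [h, false_and, Nat.card_of_isEmpty]
  rw [Finset.sum_congr rfl fun M _ => fiber M, ← Nat.card_subtype_prod_and]
  refine Nat.card_congr ((Equiv.prodComm _ _).subtypeEquiv fun x => ?_)
  rw [Subgroup.exists_iUnion_mul_singleton_iff]
  simp only [Equiv.prodComm_apply, Prod.fst_swap, Prod.snd_swap]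
  tauto

end Counting

theorem card_pairs_eq_alternating_sum_general {G : Type*} [Group G] [Finite G]
    (p t n s l k : ℕ) (hp : p.Prime) (hG : Nat.card G = p ^ t * n)
    (hs : s ≤ t) (hl : l ≤ s) (hk : k ≤ l) :
    (Nat.card {x : Subgroup G × Set G //
        Nat.card x.1 = p ^ (s - l) ∧ (1 : G) ∈ x.2 ∧ Nat.card x.2 = p ^ s ∧
        Nat.card (MulAction.stabilizer G x.2) = p ^ (s - k) ∧
        ∃ S : Set G, x.2 = ⋃ g ∈ S, (x.1 : Set G) * {g}} : ℤ)
      = ∑ I ∈ ((Finset.range (k + 1)).powerset.filter (fun I => k ∈ I)).attach,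
          (-1 : ℤ) ^ (I.1.card + 1) *
            bCoeff p t s n (I.1.min' ⟨k, (Finset.mem_filter.mp I.2).2⟩) *
            (chainCount G p s (insert l I.1) : ℤ) := by
  classical
  have := Fintype.ofFinite G
  set F := (Finset.range (k + 1)).powerset.filter (fun I => k ∈ I)
  set 𝓜 := Finset.univ.filter (fun M : Set G => (1 : G) ∈ M ∧ Nat.card M = p ^ s)
  calc _ = ∑ M ∈ 𝓜, ∑ I ∈ F, (-1 : ℤ) ^ (I.card + 1) *
        (chainCountBelow p s (stabilizer G M) (insert l I) : ℤ) := by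
        rw [card_pairs_eq_sum_chainCountBelow, Nat.cast_sum]
        refine Finset.sum_congr rfl fun M hM => ?_
        obtain ⟨d, hd, hTd⟩ := (Nat.dvd_prime_pow hp).1
          ((Finset.mem_filter.1 hM).2.2 ▸ Subgroup.card_dvd_of_le_stabilizer le_rfl)
        rw [sum_neg_one_pow_mul_chainCountBelow hp.one_lt (j := s - d)
          (by rw [hTd, Nat.sub_sub_self hd]) (Nat.sub_le s d), hTd]
        have : p ^ d = p ^ (s - k) ↔ s - d = k :=
          (Nat.pow_right_injective hp.two_le).eq_iff.trans (by omega)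
        simp only [this, Nat.cast_ite, Nat.cast_zero]
    _ = ∑ I ∈ F, (-1 : ℤ) ^ (I.card + 1) *
        ∑ M ∈ 𝓜, (chainCountBelow p s (stabilizer G M) (insert l I) : ℤ) := by
        rw [Finset.sum_comm]
        simp_rw [Finset.mul_sum]
    _ = _ := by
        rw [← Finset.sum_attach]
        refine Finset.sum_congr rfl fun I _ => ?_
        have hkI := (Finset.mem_filter.1 I.2).2
        have hmin_le_k := I.1.min'_le k hkI
        have hmin : ∀ i ∈ insert l I.1, I.1.min' ⟨k, hkI⟩ ≤ i :=
          Finset.forall_mem_insert _ _ _ |>.2 ⟨hmin_le_k.trans hk, fun i hi => I.1.min'_le i hi⟩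
        rw [mul_assoc, bCoeff_mul_chainCount hp.pos hG hs
          (Finset.mem_insert_of_mem (Finset.min'_mem _ _)) hmin (hmin_le_k.trans (hk.trans hl))]

/-- Let `l ∈ [0, s]` and `k ∈ [0, l]`.  The number of pairs `(U, M)`, where `U ≤ G`
with `|U| = p^(s-l)`, `M ⊆ G` with `1 ∈ M`, `|M| = p^s`, `|Stab(M)| = p^(s-k)` and
`M` a union of right cosets of `U`, equals
`∑_{I ⊆ [0,k], k ∈ I} (-1)^(|I|+1) · b(min I) · N(s - (I ∪ {l}))`. -/
theorem card_pairs_eq_alternating_sum {G : Type*} [Group G] [Finite G]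
    (p t n s l k : ℕ) (hp : p.Prime) (hG : Nat.card G = p ^ t * n) (hn : ¬ p ∣ n)
    (hs : s ≤ t) (hl : l ≤ s) (hk : k ≤ l) :
    (Nat.card {x : Subgroup G × Set G //
        Nat.card x.1 = p ^ (s - l) ∧ (1 : G) ∈ x.2 ∧ Nat.card x.2 = p ^ s ∧
        Nat.card (MulAction.stabilizer G x.2) = p ^ (s - k) ∧
        ∃ S : Set G, x.2 = ⋃ g ∈ S, (x.1 : Set G) * {g}} : ℤ)
      = ∑ I ∈ ((Finset.range (k + 1)).powerset.filter (fun I => k ∈ I)).attach,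
          (-1 : ℤ) ^ (I.1.card + 1) *
            bCoeff p t s n (I.1.min' ⟨k, (Finset.mem_filter.mp I.2).2⟩) *
            (chainCount G p s (insert l I.1) : ℤ) :=
  card_pairs_eq_alternating_sum_general p t n s l k hp hG hs hl hk
end
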